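/- For all finite nonempty graphs G and H, Γρ(G ∨ H) = |V(G)| + |V(H)| − min{i(G), i(H)} + 1, where G ∨ H is the join of G and H. -/

import Mathlib

open SimpleGraph

/-- A packing `k`-coloring of `G`: colors in `{1,…,k}` and vertices of equal color `i`
are at distance greater than `i` (vertices in different components are unconstrained). -/
def IsPackingColoring {V : Type*} (G : SimpleGraph V) (k : ℕ) (c : V → ℕ) : Prop :=
  (∀ v, 1 ≤ c v ∧ c v ≤ k) ∧
  ∀ u v, u ≠ v → c u = c v → G.Reachable u v → c u < G.dist u v

/-- A greedy packing `k`-coloring: a packing `k`-coloring that uses color `k` and in which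
every vertex of color `i ≥ 2` has, for every `j < i`, a vertex of color `j`
at distance at most `j`. -/
def IsGreedyPackingColoring {V : Type*} (G : SimpleGraph V) (k : ℕ) (c : V → ℕ) : Prop :=
  IsPackingColoring G k c ∧ (∃ v, c v = k) ∧
  ∀ v, ∀ j, 1 ≤ j → j < c v → ∃ u, c u = j ∧ G.Reachable u v ∧ G.dist u v ≤ j

/-- The Grundy packing chromatic number: the largest `k` admitting a greedy packing
`k`-coloring. -/
noncomputable def grundyPackingChromaticNumber {V : Type*} (G : SimpleGraph V) : ℕ :=
  sSup {k | ∃ c : V → ℕ, IsGreedyPackingColoring G k c}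

/-- The packing chromatic number: the smallest `k` admitting a packing `k`-coloring. -/
noncomputable def packingChromaticNumber {V : Type*} (G : SimpleGraph V) : ℕ :=
  sInf {k | ∃ c : V → ℕ, IsPackingColoring G k c}

/-- `s` is an independent set of `G`. -/
def IsIndepFinset {V : Type*} (G : SimpleGraph V) (s : Finset V) : Prop :=
  ∀ u ∈ s, ∀ v ∈ s, ¬ G.Adj u v

/-- `s` is a maximal independent set of `G`. -/
def IsMaxIndepFinset {V : Type*} (G : SimpleGraph V) (s : Finset V) : Prop :=
  IsIndepFinset G s ∧ ∀ t : Finset V, IsIndepFinset G t → s ⊆ t → s = t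

/-- The independent domination number `i(G)`:
the minimum cardinality of a maximal independent set. -/
noncomputable def indepDomNum {V : Type*} (G : SimpleGraph V) [Fintype V] : ℕ :=
  sInf {n | ∃ s : Finset V, IsMaxIndepFinset G s ∧ s.card = n}

/-- The graph `G^ℓ`: same vertices, `u ∼ v` iff `u ≠ v` and `d_G(u,v) ≤ ℓ`. -/
def distPow {V : Type*} (G : SimpleGraph V) (ℓ : ℕ) : SimpleGraph V where
  Adj u v := u ≠ v ∧ G.dist u v ≤ ℓ
  symm := by
    constructor
    rintro u v ⟨h1, h2⟩
    exact ⟨h1.symm, by rwa [SimpleGraph.dist_comm]⟩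
  loopless := by constructor; rintro v ⟨h, _⟩; exact h rfl

/-- The graph `G(k)`: vertex set is `k` disjoint copies of `V(G)`, the copy `i : Fin k`
playing the role of `G^(i+1)`; the `k` copies of each vertex form a clique, and within the
`i`-th copy two distinct vertices are adjacent iff their distance in `G` is at most `i+1`. -/
def levelGraph {V : Type*} (G : SimpleGraph V) (k : ℕ) : SimpleGraph (V × Fin k) where
  Adj p q := (p.1 = q.1 ∧ p.2 ≠ q.2) ∨
    (p.1 ≠ q.1 ∧ p.2 = q.2 ∧ G.dist p.1 q.1 ≤ (p.2 : ℕ) + 1)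
  symm := by
    constructor
    rintro p q (⟨h1, h2⟩ | ⟨h1, h2, h3⟩)
    · exact Or.inl ⟨h1.symm, h2.symm⟩
    · refine Or.inr ⟨h1.symm, h2.symm, ?_⟩
      rw [SimpleGraph.dist_comm, ← h2]
      exact h3
  loopless := by constructor; rintro p (⟨_, h⟩ | ⟨h, _, _⟩) <;> exact h rfl

/-- `A` is a maximal independent set of the subgraph of `H` induced on `S`. -/
def IsMaxIndepSetOn {V : Type*} (H : SimpleGraph V) (S : Set V) (A : Set V) : Prop :=
  A ⊆ S ∧ (∀ u ∈ A, ∀ v ∈ A, ¬ H.Adj u v) ∧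
  ∀ B : Set V, B ⊆ S → (∀ u ∈ B, ∀ v ∈ B, ¬ H.Adj u v) → A ⊆ B → A = B

/-- The eccentricity of a vertex. -/
noncomputable def eccent {V : Type*} (G : SimpleGraph V) [Fintype V] (v : V) : ℕ :=
  Finset.univ.sup (fun u => G.dist v u)

/-- The radius of a graph. -/
noncomputable def graphRadius {V : Type*} (G : SimpleGraph V) [Fintype V] : ℕ :=
  sInf (Set.range (eccent G))

/-- The diameter of a graph. -/
noncomputable def graphDiam {V : Type*} (G : SimpleGraph V) [Fintype V] : ℕ :=
  Finset.univ.sup (eccent G)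

/-- The diametrical graph `D(G)`: `x ∼ y` iff `d_G(x,y) = diam(G)`. -/
noncomputable def diamGraph {V : Type*} (G : SimpleGraph V) [Fintype V] : SimpleGraph V where
  Adj u v := u ≠ v ∧ G.dist u v = graphDiam G
  symm := by
    constructor
    rintro u v ⟨h1, h2⟩
    exact ⟨h1.symm, by rwa [SimpleGraph.dist_comm]⟩
  loopless := by constructor; rintro v ⟨h, _⟩; exact h rfl

/-- `Q` is a clique of the subgraph of `H` induced on `S`. -/
def IsCliqueFinsetOn {V : Type*} (H : SimpleGraph V) (S : Set V) (Q : Finset V) : Prop :=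
  ↑Q ⊆ S ∧ ∀ u ∈ Q, ∀ v ∈ Q, u ≠ v → H.Adj u v

/-- `Q` is a maximal clique of the subgraph of `H` induced on `S`. -/
def IsMaxCliqueFinsetOn {V : Type*} (H : SimpleGraph V) (S : Set V) (Q : Finset V) : Prop :=
  IsCliqueFinsetOn H S Q ∧ ∀ R : Finset V, IsCliqueFinsetOn H S R → Q ⊆ R → Q = R

/-- The join `G ∨ H` of two graphs. -/
def joinGraph {V W : Type*} (G : SimpleGraph V) (H : SimpleGraph W) :
    SimpleGraph (V ⊕ W) where
  Adj p q := match p, q with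
    | .inl u, .inl v => G.Adj u v
    | .inr u, .inr v => H.Adj u v
    | .inl _, .inr _ => True
    | .inr _, .inl _ => True
  symm := by
    constructor
    rintro (u | u) (v | v) h
    · exact G.adj_symm h
    · trivial
    · trivial
    · exact H.adj_symm h
  loopless := by
    constructor
    rintro (u | u) h
    · exact G.irrefl h
    · exact H.irrefl h

/-- `K_{n,n}` minus a perfect matching: parts `{u_i}` and `{v_i}`, with `u_i ∼ v_j` iff
`i ≠ j`. -/
def completeBipartiteMinusMatching (n : ℕ) : SimpleGraph (Fin n ⊕ Fin n) where
  Adj p q := match p, q with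
    | .inl i, .inr j => i ≠ j
    | .inr i, .inl j => i ≠ j
    | _, _ => False
  symm := by constructor; rintro (i | i) (j | j) h <;> first | exact h.symm | exact h
  loopless := by constructor; rintro (i | i) h <;> exact h



/-!
In a greedy packing coloring of a finite graph `G`, color class `1` is a maximal independent
set `S`: it is independent by the packing condition at distance `1` and dominating by the greedy
condition for color `1`. Every color `2, …, k` occurs, necessarily outside `S`, so
`k ≤ |V| - i(G) + 1`.
When any two vertices are at distance at most `2`, the bound is attained by coloring a smallest
maximal independent set with `1` and the other vertices with pairwise distinct colors `2, 3, …`.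
The join of two nonempty graphs has this property, and its maximal independent sets are exactly
those of `G` and those of `H`, so `i(G ∨ H) = min (i(G), i(H))`.
-/

section IndependentSets

open Finset

variable {V : Type*} {G : SimpleGraph V} {s : Finset V}

lemma isMaxIndepFinset_iff :
    IsMaxIndepFinset G s ↔ IsIndepFinset G s ∧ ∀ v ∉ s, ∃ u ∈ s, G.Adj u v := by
  classical
  refine ⟨fun hs => ⟨hs.1, fun v hv => ?_⟩,
    fun ⟨hind, hdom⟩ => ⟨hind, fun t ht hst => ?_⟩⟩
  · by_contra! hcon
    have hins : IsIndepFinset G (insert v s) := by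
      simp only [IsIndepFinset, mem_insert, forall_eq_or_imp, G.irrefl, not_false_eq_true,
        true_and]
      exact ⟨fun u hu huv => hcon u hu huv.symm,
        fun u hu => ⟨hcon u hu, fun w hw => hs.1 u hu w hw⟩⟩
    exact hv (hs.2 _ hins (subset_insert v s) ▸ mem_insert_self v s)
  · refine hst.antisymm fun x hx => ?_
    by_contra hxs
    obtain ⟨u, hu, hux⟩ := hdom x hxs
    exact ht u (hst hu) x hx hux

lemma IsMaxIndepFinset.nonempty [Nonempty V] (hs : IsMaxIndepFinset G s) : s.Nonempty := by
  by_contra! h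
  obtain ⟨u, hu, -⟩ := (isMaxIndepFinset_iff.mp hs).2 (Classical.arbitrary V) (by simp [h])
  simp [h] at hu

variable (G) in
lemma exists_isMaxIndepFinset [Finite V] : ∃ s, IsMaxIndepFinset G s := by
  obtain ⟨s, -, hs⟩ :=
    Finite.exists_le_maximal (p := IsIndepFinset G) (a := ∅) (by simp [IsIndepFinset])
  exact ⟨s, hs.prop, fun t ht hst => hst.antisymm (hs.2 ht hst)⟩

lemma indepDomNum_le_card [Fintype V] (hs : IsMaxIndepFinset G s) : indepDomNum G ≤ #s :=
  Nat.sInf_le ⟨s, hs, rfl⟩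

variable (G) in
lemma exists_isMaxIndepFinset_card_eq_indepDomNum [Fintype V] :
    ∃ s, IsMaxIndepFinset G s ∧ #s = indepDomNum G :=
  Nat.sInf_mem (s := {n | ∃ s, IsMaxIndepFinset G s ∧ #s = n})
    (let ⟨s, hs⟩ := exists_isMaxIndepFinset G; ⟨_, s, hs, rfl⟩)

end IndependentSets

section PackingColorings

open Finset

variable {V : Type*} {G : SimpleGraph V} {k : ℕ} {c : V → ℕ}

lemma IsGreedyPackingColoring.exists_color_eq (hc : IsGreedyPackingColoring G k c) {j : ℕ}
    (hj : 1 ≤ j) (hjk : j ≤ k) : ∃ v, c v = j := by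
  obtain ⟨v, hv⟩ := hc.2.1
  rcases hjk.eq_or_lt with rfl | hlt
  · exact ⟨v, hv⟩
  · obtain ⟨u, hu, -⟩ := hc.2.2 v j hj (hv ▸ hlt)
    exact ⟨u, hu⟩

lemma IsGreedyPackingColoring.isMaxIndepFinset_filter_eq_one [Fintype V]
    (hc : IsGreedyPackingColoring G k c) : IsMaxIndepFinset G {v | c v = 1} := by
  refine isMaxIndepFinset_iff.mpr ⟨fun u hu v hv huv => ?_, fun v hv => ?_⟩
  · simp only [mem_filter, mem_univ, true_and] at hu hv
    have := hc.1.2 u v huv.ne (hu.trans hv.symm) huv.reachable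
    rw [dist_eq_one_iff_adj.mpr huv, hu] at this
    exact this.false
  · simp only [mem_filter, mem_univ, true_and] at hv ⊢
    obtain ⟨u, hu, hreach, hdist⟩ := hc.2.2 v 1 le_rfl (by have := (hc.1.1 v).1; omega)
    have hpos := hreach.pos_dist_of_ne (by rintro rfl; exact hv hu)
    exact ⟨u, hu, dist_eq_one_iff_adj.mp (by omega)⟩

lemma IsGreedyPackingColoring.le_card_sub_indepDomNum_add_one [Fintype V]
    (hc : IsGreedyPackingColoring G k c) : k ≤ Fintype.card V - indepDomNum G + 1 := by
  classical
  set S : Finset V := {v | c v = 1}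
  have hsurj : Set.SurjOn c ↑Sᶜ ↑(Icc 2 k) := fun j hj => by
    simp only [coe_Icc, Set.mem_Icc] at hj
    obtain ⟨v, hv⟩ := hc.exists_color_eq (by omega) hj.2
    exact ⟨v, by simpa [S, hv] using (show j ≠ 1 by omega), hv⟩
  have hcount := card_le_card_of_surjOn c hsurj
  have hmin : indepDomNum G ≤ #S := indepDomNum_le_card hc.isMaxIndepFinset_filter_eq_one
  rw [Nat.card_Icc, card_compl] at hcount
  have := S.card_le_univ
  omega

lemma isGreedyPackingColoring_of_bijOn (hconn : G.Connected) (hdist : ∀ u v, G.dist u v ≤ 2)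
    {S : Finset V} (hS : IsMaxIndepFinset G S) (hk : 1 ≤ k) (hcS : ∀ v ∈ S, c v = 1)
    (hbij : Set.BijOn c (↑S)ᶜ (Set.Icc 2 k)) : IsGreedyPackingColoring G k c := by
  have hcS' : ∀ v ∉ S, 2 ≤ c v ∧ c v ≤ k := fun v hv => hbij.mapsTo hv
  have hmem_of_eq_one : ∀ v, c v = 1 → v ∈ S := fun v h => by
    by_contra hv; have := hcS' v hv; omega
  refine ⟨⟨fun v => ?_, fun u v huv hcuv _ => ?_⟩, ?_, fun v j hj hjv => ?_⟩
  · by_cases hv : v ∈ S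
    · rw [hcS v hv]; exact ⟨le_rfl, hk⟩
    · have := hcS' v hv; omega
  · by_cases hu : u ∈ S
    · have hv : v ∈ S := hmem_of_eq_one v (hcuv ▸ hcS u hu)
      rw [hcS u hu]
      exact hconn.one_lt_dist_of_ne_of_not_adj huv (hS.1 u hu v hv)
    · have hv : v ∉ S := fun hv => hu (hmem_of_eq_one u (hcuv ▸ hcS v hv))
      exact absurd (hbij.injOn hu hv hcuv) huv
  · rcases hk.eq_or_lt with rfl | hk
    · have := hconn.nonempty
      obtain ⟨v, hv⟩ := hS.nonempty
      exact ⟨v, hcS v hv⟩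
    · obtain ⟨v, -, hv⟩ := hbij.surjOn ⟨hk, le_rfl⟩
      exact ⟨v, hv⟩
  · have hv : v ∉ S := fun hv => by rw [hcS v hv] at hjv; omega
    rcases hj.eq_or_lt with rfl | hj
    · obtain ⟨u, hu, huv⟩ := (isMaxIndepFinset_iff.mp hS).2 v hv
      exact ⟨u, hcS u hu, huv.reachable, (dist_eq_one_iff_adj.mpr huv).le⟩
    · obtain ⟨u, -, hu⟩ := hbij.surjOn ⟨hj, by have := hcS' v hv; omega⟩
      exact ⟨u, hu, hconn u v, (hdist u v).trans hj⟩

variable [Fintype V]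

lemma exists_isGreedyPackingColoring_of_isMaxIndepFinset (hconn : G.Connected)
    (hdist : ∀ u v, G.dist u v ≤ 2) {S : Finset V} (hS : IsMaxIndepFinset G S) :
    ∃ c, IsGreedyPackingColoring G (Fintype.card V - #S + 1) c := by
  classical
  obtain ⟨f, hf⟩ := (Set.toFinite (↑S : Set V)ᶜ).exists_bijOn_of_encard_eq
    (t := Set.Icc 2 (Fintype.card V - #S + 1)) (by
      rw [← coe_compl, ← coe_Icc, Set.encard_coe_eq_coe_finsetCard,
        Set.encard_coe_eq_coe_finsetCard, card_compl, Nat.card_Icc]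
      congr 1)
  exact ⟨fun v => if v ∈ S then 1 else f v, isGreedyPackingColoring_of_bijOn hconn hdist hS
    (by omega) (fun v hv => if_pos hv) (hf.congr fun v hv => (if_neg hv).symm)⟩

theorem grundyPackingChromaticNumber_eq_of_dist_le_two (hconn : G.Connected)
    (hdist : ∀ u v, G.dist u v ≤ 2) :
    grundyPackingChromaticNumber G = Fintype.card V - indepDomNum G + 1 := by
  refine IsGreatest.csSup_eq ⟨?_, fun k ⟨c, hc⟩ => hc.le_card_sub_indepDomNum_add_one⟩
  obtain ⟨S, hS, hcard⟩ := exists_isMaxIndepFinset_card_eq_indepDomNum G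
  exact hcard ▸ exists_isGreedyPackingColoring_of_isMaxIndepFinset hconn hdist hS

end PackingColorings

section Join

open Finset Sum

variable {V W : Type*} {G : SimpleGraph V} {H : SimpleGraph W}

@[simp] lemma joinGraph_adj_inl_inl {a b : V} : (joinGraph G H).Adj (inl a) (inl b) ↔ G.Adj a b :=
  Iff.rfl

@[simp] lemma joinGraph_adj_inr_inr {a b : W} : (joinGraph G H).Adj (inr a) (inr b) ↔ H.Adj a b :=
  Iff.rfl

@[simp] lemma joinGraph_adj_inl_inr {a : V} {b : W} : (joinGraph G H).Adj (inl a) (inr b) :=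
  trivial

@[simp] lemma joinGraph_adj_inr_inl {a : W} {b : V} : (joinGraph G H).Adj (inr a) (inl b) :=
  trivial

lemma IsIndepFinset.toLeft_eq_empty_or_toRight_eq_empty {S : Finset (V ⊕ W)}
    (hS : IsIndepFinset (joinGraph G H) S) : S.toLeft = ∅ ∨ S.toRight = ∅ := by
  by_contra! h
  obtain ⟨⟨a, ha⟩, ⟨b, hb⟩⟩ := h
  exact hS _ (mem_toLeft.mp ha) _ (mem_toRight.mp hb) (by simp)

variable [Nonempty V] [Nonempty W]

lemma isMaxIndepFinset_joinGraph_disjSum_empty_iff {s : Finset V} :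
    IsMaxIndepFinset (joinGraph G H) (s.disjSum ∅) ↔ IsMaxIndepFinset G s := by
  rw [← and_iff_left_of_imp (IsMaxIndepFinset.nonempty (G := G))]
  simp [isMaxIndepFinset_iff, IsIndepFinset, Sum.forall, Finset.Nonempty, and_comm, and_left_comm]

lemma isMaxIndepFinset_joinGraph_empty_disjSum_iff {t : Finset W} :
    IsMaxIndepFinset (joinGraph G H) ((∅ : Finset V).disjSum t) ↔ IsMaxIndepFinset H t := by
  rw [← and_iff_left_of_imp (IsMaxIndepFinset.nonempty (G := H))]
  simp [isMaxIndepFinset_iff, IsIndepFinset, Sum.forall, Finset.Nonempty, and_comm, and_left_comm]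

variable (G H) in
lemma joinGraph_connected : (joinGraph G H).Connected := by
  have a₀ := Classical.arbitrary V
  have b₀ := Classical.arbitrary W
  have hb₀ : ∀ u, (joinGraph G H).Reachable u (inr b₀) := by
    rintro (a | b)
    · exact joinGraph_adj_inl_inr.reachable
    · exact (joinGraph_adj_inr_inl (b := a₀)).reachable.trans
        joinGraph_adj_inl_inr.reachable
  exact ⟨fun u v => (hb₀ u).trans (hb₀ v).symm⟩

variable (G H) in
lemma joinGraph_dist_le_two : ∀ u v, (joinGraph G H).dist u v ≤ 2 := by
  have a₀ := Classical.arbitrary V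
  have b₀ := Classical.arbitrary W
  have hpath {u w v : V ⊕ W} (huw : (joinGraph G H).Adj u w) (hwv : (joinGraph G H).Adj w v) :
      (joinGraph G H).dist u v ≤ 2 :=
    (hwv.reachable.dist_triangle_right u).trans
      (by rw [dist_eq_one_iff_adj.mpr huw, dist_eq_one_iff_adj.mpr hwv])
  rintro (a | a) (b | b)
  · exact hpath (w := inr b₀) (by simp) (by simp)
  · exact (dist_eq_one_iff_adj.mpr (by simp)).trans_le one_le_two
  · exact (dist_eq_one_iff_adj.mpr (by simp)).trans_le one_le_two
  · exact hpath (w := inl a₀) (by simp) (by simp)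

lemma indepDomNum_joinGraph [Fintype V] [Fintype W] :
    indepDomNum (joinGraph G H) = min (indepDomNum G) (indepDomNum H) := by
  obtain ⟨s, hs, hscard⟩ := exists_isMaxIndepFinset_card_eq_indepDomNum G
  obtain ⟨t, ht, htcard⟩ := exists_isMaxIndepFinset_card_eq_indepDomNum H
  obtain ⟨S, hS, hScard⟩ := exists_isMaxIndepFinset_card_eq_indepDomNum (joinGraph G H)
  refine le_antisymm (le_min ?_ ?_) ?_
  · simpa [hscard] using indepDomNum_le_card (isMaxIndepFinset_joinGraph_disjSum_empty_iff.mpr hs)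
  · simpa [htcard] using indepDomNum_le_card (isMaxIndepFinset_joinGraph_empty_disjSum_iff.mpr ht)
  · rw [← hScard, ← S.card_toLeft_add_card_toRight]
    rcases hS.1.toLeft_eq_empty_or_toRight_eq_empty with h | h
    · rw [← S.toLeft_disjSum_toRight, h] at hS
      rw [h, card_empty, zero_add]
      exact min_le_of_right_le
        (indepDomNum_le_card (isMaxIndepFinset_joinGraph_empty_disjSum_iff.mp hS))
    · rw [← S.toLeft_disjSum_toRight, h] at hS
      rw [h, card_empty, add_zero]
      exact min_le_of_left_le
        (indepDomNum_le_card (isMaxIndepFinset_joinGraph_disjSum_empty_iff.mp hS))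

end Join

/-- For all finite nonempty graphs `G` and `H`,
`Γρ(G ∨ H) = |V(G)| + |V(H)| - min{i(G), i(H)} + 1`. -/
theorem grundyPackingChromaticNumber_join {V W : Type*} [Fintype V] [Fintype W]
    [Nonempty V] [Nonempty W] (G : SimpleGraph V) (H : SimpleGraph W) :
    grundyPackingChromaticNumber (joinGraph G H) =
      Fintype.card V + Fintype.card W - min (indepDomNum G) (indepDomNum H) + 1 := by
  rw [grundyPackingChromaticNumber_eq_of_dist_le_two (joinGraph_connected G H)
    (joinGraph_dist_le_two G H), indepDomNum_joinGraph, Fintype.card_sum]
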